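/- arXiv:0904.4902 — 8 statements merged into one kernel-verified Lean document; each statement's English description precedes it below -/
import Mathlib

section
/- Let A be a finite structure with a binary relation f and a binary relation R such that f is acyclic (no element is f-reachable in one or more steps from itself) and A satisfies T1[f]: for all u,v, R(u,v) iff u = v or there exists w with f(u,w) and R(w,v). Then R equals the reflexive transitive closure of f. -/
/-!
Finiteness and acyclicity make the converse of `f` well-founded. Reading `T1[f]` from right to
left shows that `R` is closed under prepending an `f`-step, so it contains `f*`; reading it from
left to right and inducting along the converse of `f` shows that every `R`-pair is joined by an
`f`-path.
-/

open Relation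

section

variable {V : Type*} {f R : V → V → Prop}

theorem wellFounded_flip_of_acyclic [Finite V] (hacyc : ∀ a, ¬ TransGen f a a) :
    WellFounded (flip f) :=
  have : IsTrans V (flip (TransGen f)) := ⟨fun _ _ _ h₁ h₂ => h₂.trans h₁⟩
  have : Std.Irrefl (flip (TransGen f)) := ⟨hacyc⟩
  Subrelation.wf (r := flip (TransGen f)) (fun h => TransGen.single h)
    (Finite.wellFounded_of_trans_of_irrefl _)

theorem of_reflTransGen_of_head_closed (hrefl : ∀ v, R v v)
    (hstep : ∀ u w v, f u w → R w v → R u v) {u v : V} (h : ReflTransGen f u v) : R u v := by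
  induction h using ReflTransGen.head_induction_on with
  | refl => exact hrefl v
  | head hf _ ih => exact hstep _ _ v hf ih

theorem reflTransGen_of_unfold (hwf : WellFounded (flip f))
    (hunfold : ∀ u v, R u v → u = v ∨ ∃ w, f u w ∧ R w v) {u v : V} (h : R u v) :
    ReflTransGen f u v := by
  induction u using hwf.induction with
  | _ u ih =>
    rcases hunfold u v h with rfl | ⟨w, hf, hR⟩
    · exact .refl
    · exact .head hf (ih w hf hR)

end

theorem stmt_0 {V : Type*} [Fintype V] (f R : V → V → Prop)
    (hacyc : ∀ a : V, ¬ Relation.TransGen f a a)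
    (hT1 : ∀ u v : V, R u v ↔ (u = v ∨ ∃ w, f u w ∧ R w v)) :
    ∀ u v : V, R u v ↔ Relation.ReflTransGen f u v := by
  have hwf := wellFounded_flip_of_acyclic hacyc
  refine fun u v => ⟨reflTransGen_of_unfold hwf fun u v => (hT1 u v).mp, ?_⟩
  exact of_reflTransGen_of_head_closed (fun v => (hT1 v v).mpr (Or.inl rfl))
    fun u w v hf hR => (hT1 u v).mpr (Or.inr ⟨w, hf, hR⟩)
end

section
/- Suppose relations f, R on a set V satisfy T1[f] (R(u,v) ↔ u = v ∨ ∃w. f(u,w) ∧ R(w,v)) and the induction principle Ind: for every predicate P on V and every z ∈ V, if P(z) holds and P is preserved along f-edges (P(u) ∧ f(u,v) → P(v)), then for all u, R(z,u) implies P(u). Then T2[f] holds: for all u,v, R(u,v) iff u = v or there exists w with R(u,w) and f(w,v). -/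
/-! Both `T1[f]` and `T2[f]` are unfolding equations of the reflexive-transitive closure of `f`,
from the head and from the tail respectively. The backward direction of `T1[f]` says that `R`
contains `f*` (head induction on `f*`), and the induction principle applied to `P := f* z` gives
the converse. Hence `R = f*`, and `T2[f]` is the tail unfolding of `f*`. -/

open Relation

section

variable {V : Type*} {f R : V → V → Prop}

theorem Relation.ReflTransGen.rel_of_refl_of_head_step (hrefl : ∀ u, R u u)
    (hstep : ∀ u w v, f u w → R w v → R u v) {u v : V} (h : ReflTransGen f u v) : R u v := by
  induction h using ReflTransGen.head_induction_on with
  | refl => exact hrefl v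
  | head huw _ hwv => exact hstep _ _ _ huw hwv

theorem reflTransGen_of_induction
    (hInd : ∀ (P : V → Prop) (z : V), (P z ∧ ∀ u v, P u → f u v → P v) → ∀ u, R z u → P u)
    {u v : V} (h : R u v) : ReflTransGen f u v :=
  hInd (ReflTransGen f u) u ⟨.refl, fun _ _ hu huv => hu.tail huv⟩ v h

theorem eq_reflTransGen_of_unfold_head_of_induction
    (hT1 : ∀ u v : V, R u v ↔ (u = v ∨ ∃ w, f u w ∧ R w v))
    (hInd : ∀ (P : V → Prop) (z : V), (P z ∧ ∀ u v, P u → f u v → P v) → ∀ u, R z u → P u) :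
    R = ReflTransGen f := by
  have hrefl : ∀ u, R u u := fun u => (hT1 u u).2 (.inl rfl)
  have hstep : ∀ u w v, f u w → R w v → R u v := fun u w v huw hwv =>
    (hT1 u v).2 (.inr ⟨w, huw, hwv⟩)
  ext u v
  exact ⟨reflTransGen_of_induction hInd, ReflTransGen.rel_of_refl_of_head_step hrefl hstep⟩

end

theorem stmt_2 {V : Type*} (f R : V → V → Prop)
    (hT1 : ∀ u v : V, R u v ↔ (u = v ∨ ∃ w, f u w ∧ R w v))
    (hInd : ∀ (P : V → Prop) (z : V),
      (P z ∧ ∀ u v, P u → f u v → P v) → ∀ u, R z u → P u) :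
    ∀ u v : V, R u v ↔ (u = v ∨ ∃ w, R u w ∧ f w v) := by
  obtain rfl := eq_reflTransGen_of_unfold_head_of_induction hT1 hInd
  intro u v
  rw [ReflTransGen.cases_tail_iff, eq_comm]
end

section
/- Suppose relations f, R on a set V satisfy T1[f], transitivity of R, and the induction principle. Then the GoOut axiom holds: for all sets A, B ⊆ V, if every f-edge leaving A enters B (∀u v, u ∈ A → v ∉ A → f(u,v) → v ∈ B), then for all u ∈ A and v ∉ A with R(u,v), there exists w ∈ B with R(u,w) and R(w,v). -/
/-!
Starting from `u ∈ A`, induct along `f` on the invariant "either we are still in `A`, or some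
`w ∈ B` lies between `u` and the current point". An `f`-step from inside `A` to outside `A`
lands in `B` and produces such a `w`; reachability extends along `f`-steps by transitivity.
Since `v ∉ A`, the invariant at `v` must be the second alternative.
-/

section

variable {V : Type*} {f R : V → V → Prop}

theorem refl_of_unfold (hT1 : ∀ u v : V, R u v ↔ (u = v ∨ ∃ w, f u w ∧ R w v)) (x : V) :
    R x x :=
  (hT1 x x).mpr (Or.inl rfl)

theorem rel_of_step (hT1 : ∀ u v : V, R u v ↔ (u = v ∨ ∃ w, f u w ∧ R w v)) {x y : V}
    (hxy : f x y) : R x y :=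
  (hT1 x y).mpr (Or.inr ⟨y, hxy, refl_of_unfold hT1 y⟩)

theorem mem_or_exists_between_of_rel (hrefl : ∀ x, R x x) (hstep : ∀ {x y}, f x y → R x y)
    (htrans : ∀ u v w : V, R u w → R w v → R u v)
    (hInd : ∀ (P : V → Prop) (z : V),
      (P z ∧ ∀ u v, P u → f u v → P v) → ∀ u, R z u → P u)
    {A B : Set V} (hEdge : ∀ u v, u ∈ A → v ∉ A → f u v → v ∈ B)
    {u : V} (hu : u ∈ A) {x : V} (hux : R u x) :
    x ∈ A ∨ ∃ w ∈ B, R u w ∧ R w x := by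
  suffices h : (x ∈ A ∧ R u x) ∨ ∃ w ∈ B, R u w ∧ R w x from h.imp_left And.left
  refine hInd (fun y ↦ (y ∈ A ∧ R u y) ∨ ∃ w ∈ B, R u w ∧ R w y) u
    ⟨Or.inl ⟨hu, hrefl u⟩, ?_⟩ x hux
  rintro y z (⟨hyA, huy⟩ | ⟨w, hwB, huw, hwy⟩) hyz
  · have huz : R u z := htrans u z y huy (hstep hyz)
    by_cases hzA : z ∈ A
    · exact Or.inl ⟨hzA, huz⟩
    · exact Or.inr ⟨z, hEdge y z hyA hzA hyz, huz, hrefl z⟩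
  · exact Or.inr ⟨w, hwB, huw, htrans w z y hwy (hstep hyz)⟩

end

theorem stmt_6 {V : Type*} (f R : V → V → Prop)
    (hT1 : ∀ u v : V, R u v ↔ (u = v ∨ ∃ w, f u w ∧ R w v))
    (htrans : ∀ u v w : V, R u w → R w v → R u v)
    (hInd : ∀ (P : V → Prop) (z : V),
      (P z ∧ ∀ u v, P u → f u v → P v) → ∀ u, R z u → P u) :
    ∀ A B : Set V,
      (∀ u v, u ∈ A → v ∉ A → f u v → v ∈ B) →
      ∀ u v, u ∈ A → v ∉ A → R u v →
        ∃ w, w ∈ B ∧ R u w ∧ R w v := by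
  intro A B hEdge u v hu hv huv
  exact (mem_or_exists_between_of_rel (refl_of_unfold hT1) (rel_of_step hT1) htrans hInd hEdge hu huv).resolve_left hv
end

section
/- Let f be a partial-functional binary relation on V (f(u,v) ∧ f(u,w) → v = w) with reflexive transitive closure f*. Then the points reachable from any node are linearly ordered: for all u, v, w, if f*(u,v) and f*(u,w), then f*(v,w) or f*(w,v). -/
theorem stmt_10 {V : Type*} (f : V → V → Prop)
    (hfunc : ∀ u v w : V, f u v → f u w → v = w) :
    ∀ u v w : V, Relation.ReflTransGen f u v → Relation.ReflTransGen f u w →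
      Relation.ReflTransGen f v w ∨ Relation.ReflTransGen f w v :=
  fun _ _ _ ↦ Relation.ReflTransGen.total_of_right_unique (fun _ _ _ ↦ hfunc _ _ _)
end

section
/- Define the structure G with universe ℕ ∪ {∞}, A = ℕ, f = {(n, n+1) : n ∈ ℕ}, R = {(u,v) : u ≤ v} (with n ≤ ∞ for all n), and for each k ∈ ℕ ∪ {∞}, R_k = {(u,v) : u ≤ v ∧ (k < u ∨ v ≤ k)}, where f_k(u,v) means f(u,v) ∧ u ≠ k. Then G satisfies all of Nelson's seven translated axiom schemes (with R_k interpreting the reachability-avoiding-k relations), but G violates NoExit[A,f]: no f-edge leaves A, yet R(0,∞) holds with ∞ ∉ A. Hence Nelson's axioms do not imply NoExit. -/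
open scoped Classical

/-- The universe ℕ ∪ {∞}. -/
abbrev GV : Type := ℕ∞

/-- The color class A = ℕ (everything except ∞). -/
def GA : Set GV := {x | x ≠ ⊤}

/-- f = successor edges on ℕ; ∞ is isolated. -/
def Gf (u v : GV) : Prop := ∃ n : ℕ, u = (n : GV) ∧ v = ((n + 1 : ℕ) : GV)

/-- R interprets f*: u ≤ v. -/
def GR (u v : GV) : Prop := u ≤ v

/-- R_k interprets (f^k)*: u ≤ v ∧ (k < u ∨ v ≤ k). -/
def GRx (k u v : GV) : Prop := u ≤ v ∧ (k < u ∨ v ≤ k)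

/-- f^x(u,v) := f(u,v) ∧ u ≠ x. -/
def Gfx (x u v : GV) : Prop := Gf u v ∧ u ≠ x

/-! The relations `GR` and `GRx` are order-theoretic, so every one of Nelson's axioms reduces to
a fact about the linear order of `ℕ∞`; (N1) only needs that `n + 1` is the successor of a finite
`n`. But `⊤` lies above every natural number without being reachable from `0` by finitely many
`f`-steps: `GR` is not the reflexive-transitive closure of `f`, which first-order axioms cannot
force, and so `NoExit` fails. -/

lemma Gf_iff {u v : GV} : Gf u v ↔ u ≠ ⊤ ∧ v = u + 1 := by
  constructor
  · rintro ⟨n, rfl, rfl⟩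
    exact ⟨ENat.natCast_ne_top n, by push_cast; rfl⟩
  · rintro ⟨hu, rfl⟩
    lift u to ℕ using hu with n
    exact ⟨n, rfl, by push_cast; rfl⟩

lemma Gf.right_mem_GA {u v : GV} (h : Gf u v) : v ∈ GA := by
  obtain ⟨hu, rfl⟩ := Gf_iff.mp h
  exact WithTop.add_ne_top.mpr ⟨hu, ENat.one_ne_top⟩

lemma exists_Gfx_and_GRx_of_lt {x u v : GV} (huv : u < v) (hside : x < u ∨ v ≤ x) :
    ∃ z, Gfx x u z ∧ GRx x z v := by
  refine ⟨u + 1, ⟨Gf_iff.mpr ⟨huv.ne_top, rfl⟩, ?_⟩, Order.add_one_le_of_lt huv, ?_⟩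
  · rcases hside with hxu | hvx
    · exact hxu.ne'
    · exact (huv.trans_le hvx).ne
  · exact hside.imp_left fun hxu => hxu.trans_le le_self_add

lemma GRx_of_Gfx {x u z v : GV} (hf : Gfx x u z) (hzv : GRx x z v) : GRx x u v := by
  obtain ⟨hu, rfl⟩ := Gf_iff.mp hf.1
  obtain ⟨hzv, hside⟩ := hzv
  refine ⟨le_self_add.trans hzv, hside.imp_left fun hxz => ?_⟩
  exact ((ENat.lt_add_one_iff hu).mp hxz).lt_of_ne hf.2.symm

lemma GRx_iff_eq_or_exists_Gfx (x u v : GV) :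
    GRx x u v ↔ u = v ∨ ∃ z, Gfx x u z ∧ GRx x z v := by
  constructor
  · rintro ⟨huv, hside⟩
    rcases huv.eq_or_lt with heq | hlt
    · exact Or.inl heq
    · exact Or.inr (exists_Gfx_and_GRx_of_lt hlt hside)
  · rintro (rfl | ⟨z, hf, hzv⟩)
    · exact ⟨le_rfl, lt_or_ge x u⟩
    · exact GRx_of_Gfx hf hzv

lemma GRx_trans {x u v w : GV} (huv : GRx x u v) (hvw : GRx x v w) : GRx x u w := by
  refine ⟨huv.1.trans hvw.1, hvw.2.imp_left fun hxv => ?_⟩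
  exact huv.2.resolve_right hxv.not_ge

lemma le_of_GRx_of_le {x y u : GV} (h : GRx y u x) (huy : u ≤ y) : x ≤ y :=
  h.2.resolve_left huy.not_gt

lemma GRx_or_GRx_of_GR {x y u : GV} (hux : GR u x) : GRx y u x ∨ GRx x u y := by
  rcases lt_or_ge y u with hyu | huy
  · exact Or.inl ⟨hux, Or.inl hyu⟩
  rcases le_or_gt x y with hxy | hyx
  · exact Or.inl ⟨hux, Or.inr hxy⟩
  · exact Or.inr ⟨huy, Or.inr hyx.le⟩

lemma GRx_of_Gf {x u v : GV} (hf : Gf x u) (huv : GR u v) : GRx x u v := by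
  obtain ⟨hx, rfl⟩ := Gf_iff.mp hf
  exact ⟨huv, Or.inl ((ENat.lt_add_one_iff hx).mpr le_rfl)⟩

theorem stmt_12 :
    -- (N1)
    (∀ x u v : GV, GRx x u v ↔ (u = v ∨ ∃ z, Gfx x u z ∧ GRx x z v)) ∧
    -- (N2)
    (∀ x u v w : GV, GRx x u v → GRx x v w → GRx x u w) ∧
    -- (N3)
    (∀ x u v : GV, GRx x u v → GR u v) ∧
    -- (N4)
    (∀ x y z u : GV, GRx y u x → GRx z u y → GRx z u x) ∧
    -- (N5)
    (∀ x y u : GV, GR u x → GRx y u x ∨ GRx x u y) ∧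
    -- (N6)
    (∀ x y z u : GV, GRx y u x → GRx z u y → GRx z x y) ∧
    -- (N7)
    (∀ x u v : GV, Gf x u → GR u v → GRx x u v) ∧
    -- no f-edge leaves A
    (∀ u v : GV, u ∈ GA → v ∉ GA → ¬ Gf u v) ∧
    -- yet R(0,∞) holds with ∞ ∉ A: NoExit[A,f] fails
    GR (0 : GV) ⊤ ∧ (0 : GV) ∈ GA ∧ (⊤ : GV) ∉ GA := by
  refine ⟨GRx_iff_eq_or_exists_Gfx, fun _ _ _ _ => GRx_trans, fun _ _ _ h => h.1,
    ?_, fun _ _ _ => GRx_or_GRx_of_GR, ?_, fun _ _ _ => GRx_of_Gf,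
    fun _ _ _ hv hf => hv hf.right_mem_GA, le_top, ENat.zero_ne_top, fun h => h rfl⟩
  · intro x y z u hx hy
    exact ⟨hx.1, hy.2.imp_right (le_of_GRx_of_le hx hy.1).trans⟩
  · intro x y z u hx hy
    exact ⟨le_of_GRx_of_le hx hy.1, hy.2.imp_left fun hzu => hzu.trans_le hx.1⟩
end

section
/- Precise update for edge removal in graphs with unique paths: Let e be a binary relation on V that is acyclic and has at most one e-path between any two nodes. Suppose e(s,t), and define e'(v₁,v₂) := e(v₁,v₂) ∧ ¬(v₁ = s ∧ v₂ = t). Then for all v₁, v₂: e'*(v₁,v₂) ↔ e*(v₁,v₂) ∧ ¬(e*(v₁,s) ∧ e*(t,v₂)). -/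
/-
Removing the edge `(s, t)` can only destroy the connections `v₁ →* v₂` that pass through
`s → t`, i.e. those with `v₁ →* s` and `t →* v₂`. Conversely, if such a pair is still
connected in the smaller graph, that path and the path `v₁ →* s → t →* v₂` are two
`e`-paths from `v₁` to `v₂`; by uniqueness they coincide, so the first one uses `s → t`.
-/

/-- `IsPath e u l v` : `l` is the list of intermediate-and-final vertices of an
`e`-path from `u` to `v` (empty list means `u = v`). -/
def IsPath {V : Type*} (e : V → V → Prop) : V → List V → V → Prop
  | u, [], v => u = v
  | u, w :: l, v => e u w ∧ IsPath e w l v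

section

variable {V : Type*}

def removeEdge (e : V → V → Prop) (s t : V) : V → V → Prop :=
  fun a b => e a b ∧ ¬ (a = s ∧ b = t)

namespace IsPath

variable {e f : V → V → Prop}

theorem append : ∀ {p q : List V} {u v w : V},
    IsPath e u p v → IsPath e v q w → IsPath e u (p ++ q) w
  | [], _, _, _, _, rfl, hq => hq
  | _ :: _, _, _, _, _, hp, hq => ⟨hp.1, append hp.2 hq⟩

theorem mono (h : ∀ a b, f a b → e a b) :
    ∀ {l : List V} {u v : V}, IsPath f u l v → IsPath e u l v
  | [], _, _, hp => hp
  | _ :: _, _, _, hp => ⟨h _ _ hp.1, mono h hp.2⟩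

theorem exists_of_reflTransGen {u v : V} (h : Relation.ReflTransGen e u v) :
    ∃ l, IsPath e u l v := by
  induction h with
  | refl => exact ⟨[], rfl⟩
  | @tail b c _ hbc ih =>
    obtain ⟨l, hl⟩ := ih
    exact ⟨l ++ [c], hl.append ⟨hbc, rfl⟩⟩

/-- Both paths visit the listed vertices, so the `f`-edge into `w` leaves `s`. -/
theorem rel_of_append_cons : ∀ {q r : List V} {u s w v : V},
    IsPath e u q s → IsPath f u (q ++ w :: r) v → f s w
  | [], _, _, _, _, _, rfl, hp => hp.1
  | _ :: _, _, _, _, _, _, hq, hp => rel_of_append_cons hq.2 hp.2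

end IsPath

theorem reflTransGen_removeEdge_or {e : V → V → Prop} {s t u v : V}
    (h : Relation.ReflTransGen e u v) :
    Relation.ReflTransGen (removeEdge e s t) u v ∨
      (Relation.ReflTransGen e u s ∧ Relation.ReflTransGen e t v) := by
  induction h with
  | refl => exact .inl .refl
  | @tail b c hub hbc ih =>
    rcases ih with hub' | ⟨hus, htb⟩
    · by_cases hst : b = s ∧ c = t
      · obtain ⟨rfl, rfl⟩ := hst
        exact .inr ⟨hub, .refl⟩
      · exact .inl (hub'.tail ⟨hbc, hst⟩)
    · exact .inr ⟨hus, htb.tail hbc⟩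

theorem not_reflTransGen_removeEdge {e : V → V → Prop} {s t v₁ v₂ : V}
    (huniq : ∀ (u v : V) (p q : List V), IsPath e u p v → IsPath e u q v → p = q)
    (hst : e s t) (h₁ : Relation.ReflTransGen e v₁ s) (h₂ : Relation.ReflTransGen e t v₂) :
    ¬ Relation.ReflTransGen (removeEdge e s t) v₁ v₂ := by
  intro h
  obtain ⟨p, hp⟩ := IsPath.exists_of_reflTransGen h
  obtain ⟨q, hq⟩ := IsPath.exists_of_reflTransGen h₁
  obtain ⟨r, hr⟩ := IsPath.exists_of_reflTransGen h₂
  have hpq : p = q ++ t :: r :=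
    huniq _ _ _ _ (hp.mono fun _ _ hab => hab.1) (hq.append ⟨hst, hr⟩)
  subst hpq
  exact (hq.rel_of_append_cons hp).2 ⟨rfl, rfl⟩

end

theorem stmt_16_general {V : Type*} (e : V → V → Prop) (s t : V)
    (huniq : ∀ (u v : V) (p q : List V), IsPath e u p v → IsPath e u q v → p = q)
    (hst : e s t) :
    ∀ v₁ v₂ : V,
      Relation.ReflTransGen (fun a b => e a b ∧ ¬ (a = s ∧ b = t)) v₁ v₂ ↔
        (Relation.ReflTransGen e v₁ v₂ ∧
          ¬ (Relation.ReflTransGen e v₁ s ∧ Relation.ReflTransGen e t v₂)) := by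
  intro v₁ v₂
  change Relation.ReflTransGen (removeEdge e s t) v₁ v₂ ↔ _
  constructor
  · intro h
    refine ⟨Relation.ReflTransGen.mono (fun _ _ hab => hab.1) _ _ h, fun ⟨h₁, h₂⟩ => ?_⟩
    exact not_reflTransGen_removeEdge huniq hst h₁ h₂ h
  · rintro ⟨h, hnot⟩
    exact (reflTransGen_removeEdge_or h).resolve_right hnot

theorem stmt_16 {V : Type*} (e : V → V → Prop) (s t : V)
    (hacyc : ∀ a : V, ¬ Relation.TransGen e a a)
    (huniq : ∀ (u v : V) (p q : List V), IsPath e u p v → IsPath e u q v → p = q)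
    (hst : e s t) :
    ∀ v₁ v₂ : V,
      Relation.ReflTransGen (fun a b => e a b ∧ ¬ (a = s ∧ b = t)) v₁ v₂ ↔
        (Relation.ReflTransGen e v₁ v₂ ∧
          ¬ (Relation.ReflTransGen e v₁ s ∧ Relation.ReflTransGen e t v₂)) :=
  stmt_16_general e s t huniq hst
end

section
/- Precise update for edge removal in acyclic functional graphs: Let e be a binary relation on V that is acyclic and partial-functional (e(u,v) ∧ e(u,w) → v = w). Suppose e(s,t), and define e'(v₁,v₂) := e(v₁,v₂) ∧ ¬(v₁ = s ∧ v₂ = t). Then for all v₁, v₂: e'*(v₁,v₂) ↔ e*(v₁,v₂) ∧ ¬(e*(v₁,s) ∧ e*(t,v₂)). -/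
/-!
In a partial-functional graph every node has at most one outgoing edge, so an `e`-path from `v₁`
that reaches `s` is forced to stay on the unique path towards `s`. An `e'`-path from a node
that reaches `s` therefore never leaves the set of nodes that reach `s`, since the step that would
leave it is exactly `s → t`; if it ended at a node reachable
from `t`, then `s → t ⇝ v₂ ⇝ s` would be a cycle. Conversely, an `e`-path that does not pass
through `s` before `t` can never have used the edge `s → t`.
-/

section

open Relation

variable {α : Type*} {r : α → α → Prop} {s t : α}

def edgeDeleted (r : α → α → Prop) (s t : α) : α → α → Prop :=
  fun a b => r a b ∧ ¬(a = s ∧ b = t)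

theorem edgeDeleted_le : edgeDeleted r s t ≤ r := fun _ _ h => h.1

theorem reflTransGen_edgeDeleted_of_not_through {a b : α} (hab : ReflTransGen r a b)
    (hnot : ¬(ReflTransGen r a s ∧ ReflTransGen r t b)) :
    ReflTransGen (edgeDeleted r s t) a b := by
  induction hab using ReflTransGen.head_induction_on with
  | refl => exact .refl
  | @head a x hax hxb ih =>
    by_cases hedge : a = s ∧ x = t
    · obtain ⟨rfl, rfl⟩ := hedge
      exact absurd ⟨.refl, hxb⟩ hnot
    · refine .head ⟨hax, hedge⟩ (ih ?_)
      rintro ⟨hxs, htb⟩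
      exact hnot ⟨.head hax hxs, htb⟩

theorem Relator.RightUnique.reflTransGen_of_head {a x : α} (hr : Relator.RightUnique r)
    (has : ReflTransGen r a s) (hax : r a x) : a = s ∨ ReflTransGen r x s := by
  rcases has.cases_head with rfl | ⟨y, hay, hys⟩
  · exact .inl rfl
  · exact .inr (hr hay hax ▸ hys)

theorem Relator.RightUnique.reflTransGen_of_reflTransGen_edgeDeleted {a b : α}
    (hr : Relator.RightUnique r) (hst : r s t) (hab : ReflTransGen (edgeDeleted r s t) a b)
    (has : ReflTransGen r a s) : ReflTransGen r b s := by
  induction hab using ReflTransGen.head_induction_on with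
  | refl => exact has
  | @head a x hax _ ih =>
    rcases hr.reflTransGen_of_head has hax.1 with rfl | hxs
    · exact absurd ⟨rfl, hr hax.1 hst⟩ hax.2
    · exact ih hxs

end

theorem stmt_17 {V : Type*} (e : V → V → Prop) (s t : V)
    (hacyc : ∀ a : V, ¬ Relation.TransGen e a a)
    (hfunc : ∀ u v w : V, e u v → e u w → v = w)
    (hst : e s t) :
    ∀ v₁ v₂ : V,
      Relation.ReflTransGen (fun a b => e a b ∧ ¬ (a = s ∧ b = t)) v₁ v₂ ↔
        (Relation.ReflTransGen e v₁ v₂ ∧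
          ¬ (Relation.ReflTransGen e v₁ s ∧ Relation.ReflTransGen e t v₂)) := by
  intro v₁ v₂
  have hfunc' : Relator.RightUnique e := fun u v w => hfunc u v w
  refine ⟨fun h => ⟨Relation.ReflTransGen.mono edgeDeleted_le _ _ h, ?_⟩,
    fun ⟨h, hnot⟩ => reflTransGen_edgeDeleted_of_not_through h hnot⟩
  rintro ⟨h₁s, ht₂⟩
  have h₂s : Relation.ReflTransGen e v₂ s := hfunc'.reflTransGen_of_reflTransGen_edgeDeleted hst h h₁s
  exact hacyc s (.head' hst (ht₂.trans h₂s))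
end

section
/- Partial correctness of list reversal (loop invariant preservation, reachability part): Let n and n' be partial-functional binary relations on V and x, y, x', y' ∈ V-valued (optional) program variables with: n' defined by n'(v₁,v₂) ↔ (n(v₁,v₂) ∧ v₁ ≠ x) ∨ (v₁ = x ∧ v₂ = y), y' = x, and n(x, x'). Assume n is acyclic, unshared (n(v₁,v) ∧ n(v₂,v) → v₁ = v₂), every node is n*-reachable from x or from y, and no node is n*-reachable from both x and y. Then every node is n'*-reachable from x' or from y', and no node is n'*-reachable from both x' and y'. -/
/-! Nodes that do not reach `x` never use the redirected edge, so from `x'` (the old successor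
of `x`, which does not reach `x` by acyclicity) and from `y` (which does not reach `x` by
disjointness) reachability along `n'` is reachability along `n`. Hence the new lists are the
tail of the old `x`-list, starting at `x'`, and the old `y`-list with `x` prepended. -/

namespace Relation

variable {α : Type*} {r s : α → α → Prop}

theorem reflTransGen_congr_of_not_reflTransGen {x a b : α}
    (hrs : ∀ c d, c ≠ x → (r c d ↔ s c d)) (ha : ¬ ReflTransGen r a x) :
    ReflTransGen r a b ↔ ReflTransGen s a b := by
  constructor
  · intro h
    induction h using ReflTransGen.head_induction_on with
    | refl => exact .refl
    | head hac _ ih =>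
      have hax : _ ≠ x := fun he => ha (he ▸ .refl)
      exact .head ((hrs _ _ hax).1 hac) (ih fun hc => ha (.head hac hc))
  · intro h
    induction h using ReflTransGen.head_induction_on with
    | refl => exact .refl
    | head hac _ ih =>
      have hax : _ ≠ x := fun he => ha (he ▸ .refl)
      have hac' := (hrs _ _ hax).2 hac
      exact .head hac' (ih fun hc => ha (.head hac' hc))

theorem reflTransGen_iff_of_forall_iff_eq {a b d : α} (h : ∀ c, r a c ↔ c = d) :
    ReflTransGen r a b ↔ a = b ∨ ReflTransGen r d b := by
  rw [ReflTransGen.cases_head_iff]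
  simp [h]

end Relation

open Relation

theorem stmt_19_general {V : Type*} (n n' : V → V → Prop) (x y x' y' : V)
    (hnfunc : ∀ v₁ v₂ v₃ : V, n v₁ v₂ → n v₁ v₃ → v₂ = v₃)
    (hn' : ∀ v₁ v₂ : V, n' v₁ v₂ ↔ ((n v₁ v₂ ∧ v₁ ≠ x) ∨ (v₁ = x ∧ v₂ = y)))
    (hy' : y' = x)
    (hx' : n x x')
    (hacyc : ∀ a : V, ¬ Relation.TransGen n a a)
    (htotal : ∀ v : V, Relation.ReflTransGen n x v ∨ Relation.ReflTransGen n y v)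
    (hdisj : ∀ v : V, ¬ (Relation.ReflTransGen n x v ∧ Relation.ReflTransGen n y v)) :
    (∀ v : V, Relation.ReflTransGen n' x' v ∨ Relation.ReflTransGen n' y' v) ∧
    (∀ v : V, ¬ (Relation.ReflTransGen n' x' v ∧ Relation.ReflTransGen n' y' v)) := by
  subst y'
  have hx'x : ¬ ReflTransGen n x' x := fun h => hacyc x (.head' hx' h)
  have hyx : ¬ ReflTransGen n y x := fun h => hdisj x ⟨.refl, h⟩
  have hagree : ∀ c d, c ≠ x → (n c d ↔ n' c d) := fun c d hc => by simp [hn', hc]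
  have hsucc : ∀ c, n x c ↔ c = x' := fun c => ⟨(hnfunc _ _ _ · hx'), by rintro rfl; exact hx'⟩
  have hsucc' : ∀ c, n' x c ↔ c = y := by simp [hn']
  have from_x' := fun v => reflTransGen_congr_of_not_reflTransGen (b := v) hagree hx'x
  have from_y := fun v => reflTransGen_congr_of_not_reflTransGen (b := v) hagree hyx
  refine ⟨fun v => ?_, fun v ⟨h₁, h₂⟩ => ?_⟩
  · rcases htotal v with h | h
    · rcases (reflTransGen_iff_of_forall_iff_eq hsucc).1 h with rfl | h
      · exact .inr .refl
      · exact .inl ((from_x' v).1 h)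
    · exact .inr (.head ((hsucc' y).2 rfl) ((from_y v).1 h))
  · rw [← from_x'] at h₁
    rcases (reflTransGen_iff_of_forall_iff_eq hsucc').1 h₂ with rfl | h₂
    · exact hx'x h₁
    · exact hdisj v ⟨.head hx' h₁, (from_y v).2 h₂⟩

theorem stmt_19 {V : Type*} (n n' : V → V → Prop) (x y x' y' : V)
    (hnfunc : ∀ v₁ v₂ v₃ : V, n v₁ v₂ → n v₁ v₃ → v₂ = v₃)
    (hn'func : ∀ v₁ v₂ v₃ : V, n' v₁ v₂ → n' v₁ v₃ → v₂ = v₃)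
    (hn' : ∀ v₁ v₂ : V, n' v₁ v₂ ↔ ((n v₁ v₂ ∧ v₁ ≠ x) ∨ (v₁ = x ∧ v₂ = y)))
    (hy' : y' = x)
    (hx' : n x x')
    (hacyc : ∀ a : V, ¬ Relation.TransGen n a a)
    (hunshared : ∀ v₁ v₂ v : V, n v₁ v → n v₂ v → v₁ = v₂)
    (htotal : ∀ v : V, Relation.ReflTransGen n x v ∨ Relation.ReflTransGen n y v)
    (hdisj : ∀ v : V, ¬ (Relation.ReflTransGen n x v ∧ Relation.ReflTransGen n y v)) :
    (∀ v : V, Relation.ReflTransGen n' x' v ∨ Relation.ReflTransGen n' y' v) ∧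
    (∀ v : V, ¬ (Relation.ReflTransGen n' x' v ∧ Relation.ReflTransGen n' y' v)) :=
  stmt_19_general n n' x y x' y' hnfunc hn' hy' hx' hacyc htotal hdisj
end
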